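/- arXiv:1612.01960 — 5 statements merged into one kernel-verified Lean document; each statement's English description precedes it below -/
import Mathlib

section
/- With W_1, W_2, W_3, W_4 and D as defined from positive integers a_1, a_2, a_3, a_4, the gcd of all four W_i equals gcd(W_i, W_{i+1}) for each i, and also equals gcd(W_i, D). -/
/-! The four relations `a_i W_i + W_{i+1} = D` give `gcd(W_i, D) = gcd(W_i, W_{i+1})` and
`gcd(W_i, D) ∣ gcd(W_{i+1}, D)`. Going once around the cycle, all four `gcd(W_i, D)` coincide;
this common value divides every `W_i`, hence is also the gcd of all four. -/

namespace Int

theorem gcd_eq_gcd_of_mul_add_eq {a x y d : ℤ} (h : a * x + y = d) : x.gcd y = x.gcd d := by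
  rw [← h, gcd_mul_right_add_right]

theorem gcd_dvd_gcd_of_mul_add_eq {a x y d : ℤ} (h : a * x + y = d) : x.gcd d ∣ y.gcd d := by
  have hx : (x.gcd d : ℤ) ∣ x := gcd_dvd_left x d
  have hd : (x.gcd d : ℤ) ∣ d := gcd_dvd_right x d
  have hy : y = d - a * x := by rw [← h]; ring
  exact dvd_gcd_iff.mpr ⟨hy ▸ dvd_sub hd (hx.mul_left a), hd⟩

theorem gcd_natCast_eq_of_dvd {x : ℤ} {e : ℕ} (h : (e : ℤ) ∣ x) : x.gcd e = e := by
  rw [gcd_eq_natAbs_right h, natAbs_natCast]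

end Int

theorem stmt_1_general (a1 a2 a3 a4 : ℤ)
    (W1 W2 W3 W4 D : ℤ)
    (hW1 : W1 = a2*a3*a4 - a3*a4 + a4 - 1)
    (hW2 : W2 = a3*a4*a1 - a4*a1 + a1 - 1)
    (hW3 : W3 = a4*a1*a2 - a1*a2 + a2 - 1)
    (hW4 : W4 = a1*a2*a3 - a2*a3 + a3 - 1)
    (hD : D = a1*a2*a3*a4 - 1)
    (g : ℕ) (hg : g = Int.gcd W1 (Int.gcd W2 (Int.gcd W3 W4))) :
    (g = Int.gcd W1 W2 ∧ g = Int.gcd W2 W3 ∧ g = Int.gcd W3 W4 ∧ g = Int.gcd W4 W1) ∧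
    (g = Int.gcd W1 D ∧ g = Int.gcd W2 D ∧ g = Int.gcd W3 D ∧ g = Int.gcd W4 D) := by
  have r1 : a1 * W1 + W2 = D := by subst_vars; ring
  have r2 : a2 * W2 + W3 = D := by subst_vars; ring
  have r3 : a3 * W3 + W4 = D := by subst_vars; ring
  have r4 : a4 * W4 + W1 = D := by subst_vars; ring
  have d1 := Int.gcd_dvd_gcd_of_mul_add_eq r1
  have d2 := Int.gcd_dvd_gcd_of_mul_add_eq r2
  have d3 := Int.gcd_dvd_gcd_of_mul_add_eq r3
  have d4 := Int.gcd_dvd_gcd_of_mul_add_eq r4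
  have q2 : W1.gcd D = W2.gcd D := Nat.dvd_antisymm d1 (d2.trans (d3.trans d4))
  have q3 : W1.gcd D = W3.gcd D := Nat.dvd_antisymm (d1.trans d2) (d3.trans d4)
  have q4 : W1.gcd D = W4.gcd D := Nat.dvd_antisymm (d1.trans (d2.trans d3)) d4
  have q1 : g = W1.gcd D := by
    rw [hg, Int.gcd_eq_gcd_of_mul_add_eq r3, ← q3, q2,
      Int.gcd_natCast_eq_of_dvd (Int.gcd_dvd_left W2 D), ← q2,
      Int.gcd_natCast_eq_of_dvd (Int.gcd_dvd_left W1 D)]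
  rw [Int.gcd_eq_gcd_of_mul_add_eq r1, Int.gcd_eq_gcd_of_mul_add_eq r2,
    Int.gcd_eq_gcd_of_mul_add_eq r3, Int.gcd_eq_gcd_of_mul_add_eq r4, ← q2, ← q3, ← q4]
  exact ⟨⟨q1, q1, q1, q1⟩, q1, q1, q1, q1⟩

theorem stmt_1 (a1 a2 a3 a4 : ℤ) (h1 : 0 < a1) (h2 : 0 < a2) (h3 : 0 < a3) (h4 : 0 < a4)
    (W1 W2 W3 W4 D : ℤ)
    (hW1 : W1 = a2*a3*a4 - a3*a4 + a4 - 1)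
    (hW2 : W2 = a3*a4*a1 - a4*a1 + a1 - 1)
    (hW3 : W3 = a4*a1*a2 - a1*a2 + a2 - 1)
    (hW4 : W4 = a1*a2*a3 - a2*a3 + a3 - 1)
    (hD : D = a1*a2*a3*a4 - 1)
    (g : ℕ) (hg : g = Int.gcd W1 (Int.gcd W2 (Int.gcd W3 W4))) :
    (g = Int.gcd W1 W2 ∧ g = Int.gcd W2 W3 ∧ g = Int.gcd W3 W4 ∧ g = Int.gcd W4 W1) ∧
    (g = Int.gcd W1 D ∧ g = Int.gcd W2 D ∧ g = Int.gcd W3 D ∧ g = Int.gcd W4 D) :=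
  stmt_1_general a1 a2 a3 a4 W1 W2 W3 W4 D hW1 hW2 hW3 hW4 hD g hg
end

section
/- Dedekind reciprocity: for coprime positive integers n and k, s(1,k;n) + s(1,n;k) = (1/12)(n/k + 1/(nk) + k/n) - 1/4, where s(a,b;n) = Σ_{i=1}^{n-1} ((ia/n))((ib/n)) and ((x)) = x - ⌊x⌋ - 1/2. -/
/-!
Write `a_i = ⌊k i / n⌋` and `r_i = k i mod n`, so that `k i = n a_i + r_i`. Since `i ↦ r_i`
permutes the residues mod `n`, `s(1,k;n) = (k ∑ i² - n ∑ i a_i) / n² - (n - 1) / 4`, and comparing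
`∑ r_i²` with `∑ i²` expresses `∑ a_i²` through `∑ i a_i`. Summing the second coordinate over the
lattice points of `[0,n) × [0,k)`, split by the diagonal `n y = k x` (which by coprimality meets
the rectangle only at the origin), relates `∑ a_i²` to `∑ j ⌊n j / k⌋`. This determines
`k ∑ i ⌊k i / n⌋ + n ∑ j ⌊n j / k⌋`, and the reciprocity law is a rearrangement of that value.
-/

/-- The sawtooth function `((x)) = x - ⌊x⌋ - 1/2` for non-integer `x`, and `0` for integer `x`. -/
def saw (x : ℚ) : ℚ := if x.den = 1 then 0 else x - ⌊x⌋ - 1/2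

/-- The generalized Dedekind sum `s(a,b;n) = ∑_{i=1}^{n-1} ((ia/n))((ib/n))`. -/
def dS (a b : ℤ) (n : ℕ) : ℚ :=
  ∑ i ∈ Finset.range n, saw (i * a / n) * saw (i * b / n)

open Finset

lemma sum_range_natCast (n : ℕ) : ∑ i ∈ range n, (i : ℚ) = n * (n - 1) / 2 := by
  induction n with
  | zero => simp
  | succ m ih => rw [sum_range_succ, ih]; push_cast; ring

lemma sum_range_natCast_sq (n : ℕ) :
    ∑ i ∈ range n, (i : ℚ) ^ 2 = n * (n - 1) * (2 * n - 1) / 6 := by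
  induction n with
  | zero => simp
  | succ m ih => rw [sum_range_succ, ih]; push_cast; ring

lemma sum_range_comp_mul_mod {M : Type*} [AddCommMonoid M] {n k : ℕ} (hco : n.Coprime k)
    (f : ℕ → M) : ∑ i ∈ range n, f (k * i % n) = ∑ i ∈ range n, f i := by
  have hmaps : ∀ i ∈ range n, k * i % n ∈ range n := fun i hi =>
    mem_range.2 (Nat.mod_lt _ ((Nat.zero_le i).trans_lt (mem_range.1 hi)))
  have hinj : Set.InjOn (fun i => k * i % n) (range n : Set ℕ) := fun i hi j hj hij =>
    (Nat.ModEq.cancel_left_of_coprime (m := n) hco hij).eq_of_lt_of_lt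
      (mem_range.1 hi) (mem_range.1 hj)
  exact sum_nbij _ hmaps hinj (surjOn_of_injOn_of_card_le _ hmaps hinj le_rfl) fun _ _ => rfl

lemma saw_eq_fract_sub_half {x : ℚ} (hx : Int.fract x ≠ 0) : saw x = Int.fract x - 1 / 2 := by
  have hden : x.den ≠ 1 := fun h => hx (by rw [← (Rat.den_eq_one_iff x).1 h, Int.fract_intCast])
  rw [saw, if_neg hden, Int.fract]

lemma saw_natCast_div {m n : ℕ} (hn : 0 < n) (h : ¬ n ∣ m) :
    saw (m / n) = (m % n : ℕ) / n - 1 / 2 := by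
  have hfract : Int.fract ((m : ℚ) / n) = (m % n : ℕ) / n :=
    Int.fract_div_natCast_eq_div_natCast_mod
  have hmod : m % n ≠ 0 := fun h' => h (Nat.dvd_of_mod_eq_zero h')
  rw [saw_eq_fract_sub_half (by rw [hfract]; positivity), hfract]

-- `saw 0 = 0` kills the `i = 0` term of `dS`, whereas the summand on the right is `1/4` there.
lemma dS_one_eq_sum {n k : ℕ} (hn : 0 < n) (hco : n.Coprime k) :
    dS 1 k n = ∑ i ∈ range n, ((i : ℚ) / n - 1 / 2) * (((k * i % n : ℕ) : ℚ) / n - 1 / 2)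
      - 1 / 4 := by
  have hterm : ∀ i ∈ range n, saw (i * (1 : ℤ) / n) * saw (i * (k : ℤ) / n)
      = ((i : ℚ) / n - 1 / 2) * (((k * i % n : ℕ) : ℚ) / n - 1 / 2)
        - if i = 0 then 1 / 4 else 0 := by
    intro i hi
    rcases Nat.eq_zero_or_pos i with rfl | hi0
    · norm_num [saw]
    have hni : ¬ n ∣ i := Nat.not_dvd_of_pos_of_lt hi0 (mem_range.1 hi)
    have hnki : ¬ n ∣ k * i := fun h => hni (hco.dvd_of_dvd_mul_left h)
    have hcast : (i : ℚ) * (k : ℤ) = (k * i : ℕ) := by push_cast; ring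
    rw [Int.cast_one, mul_one, hcast, saw_natCast_div hn hni, saw_natCast_div hn hnki,
      Nat.mod_eq_of_lt (mem_range.1 hi), if_neg hi0.ne']
    ring
  rw [dS, sum_congr rfl hterm, sum_sub_distrib, sum_ite_eq', if_pos (mem_range.2 hn)]

lemma natCast_mod {R : Type*} [Ring R] (a n : ℕ) : ((a % n : ℕ) : R) = a - n * (a / n : ℕ) := by
  rw [eq_sub_iff_add_eq, ← Nat.cast_mul, ← Nat.cast_add, Nat.mod_add_div]

lemma dS_one_eq {n k : ℕ} (hn : 0 < n) (hco : n.Coprime k) :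
    dS 1 k n = (k * (n * (n - 1) * (2 * n - 1) / 6)
      - n * ∑ i ∈ range n, (i : ℚ) * (k * i / n : ℕ)) / n ^ 2 - (n - 1) / 4 := by
  have hn0 : (n : ℚ) ≠ 0 := by positivity
  have hsum_mod : ∑ i ∈ range n, ((k * i % n : ℕ) : ℚ) = ∑ i ∈ range n, (i : ℚ) :=
    sum_range_comp_mul_mod hco fun j => (j : ℚ)
  have hsum_mul_mod : ∑ i ∈ range n, (i : ℚ) * (k * i % n : ℕ)
      = k * ∑ i ∈ range n, (i : ℚ) ^ 2 - n * ∑ i ∈ range n, (i : ℚ) * (k * i / n : ℕ) := by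
    rw [mul_sum, mul_sum, ← sum_sub_distrib]
    refine sum_congr rfl fun i _ => ?_
    rw [natCast_mod]
    push_cast
    ring
  have hexpand : ∀ i ∈ range n, ((i : ℚ) / n - 1 / 2) * (((k * i % n : ℕ) : ℚ) / n - 1 / 2)
      = (i : ℚ) * (k * i % n : ℕ) / n ^ 2 - ((i : ℚ) + (k * i % n : ℕ)) / (2 * n) + 1 / 4 :=
    fun _ _ => by field_simp; ring
  rw [dS_one_eq_sum hn hco, sum_congr rfl hexpand, sum_add_distrib, sum_sub_distrib, ← sum_div,
    ← sum_div, sum_add_distrib, hsum_mul_mod, hsum_mod, sum_const, card_range, nsmul_eq_mul,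
    sum_range_natCast, sum_range_natCast_sq]
  field_simp
  ring

lemma sum_range_mul_div {n k : ℕ} (hn : 0 < n) (hco : n.Coprime k) :
    ∑ i ∈ range n, ((k * i / n : ℕ) : ℚ) = (k - 1) * (n - 1) / 2 := by
  have hn0 : (n : ℚ) ≠ 0 := by positivity
  have hperm := sum_range_comp_mul_mod hco fun j => (j : ℚ)
  have hdiv : n * ∑ i ∈ range n, ((k * i / n : ℕ) : ℚ)
      = k * ∑ i ∈ range n, (i : ℚ) - ∑ i ∈ range n, ((k * i % n : ℕ) : ℚ) := by
    rw [mul_sum, mul_sum, ← sum_sub_distrib]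
    refine sum_congr rfl fun i _ => ?_
    rw [natCast_mod]
    push_cast
    ring
  rw [hperm, sum_range_natCast] at hdiv
  apply mul_left_cancel₀ hn0
  linear_combination hdiv

lemma sum_range_mul_div_sq {n k : ℕ} (hco : n.Coprime k) :
    n ^ 2 * ∑ i ∈ range n, ((k * i / n : ℕ) : ℚ) ^ 2
      = 2 * k * n * ∑ i ∈ range n, (i : ℚ) * (k * i / n : ℕ)
        - (k ^ 2 - 1) * (n * (n - 1) * (2 * n - 1) / 6) := by
  have hperm := sum_range_comp_mul_mod hco fun j => (j : ℚ) ^ 2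
  have hexpand : ∑ i ∈ range n, ((k * i % n : ℕ) : ℚ) ^ 2
      = k ^ 2 * ∑ i ∈ range n, (i : ℚ) ^ 2 - 2 * k * n * ∑ i ∈ range n, (i : ℚ) * (k * i / n : ℕ)
        + n ^ 2 * ∑ i ∈ range n, ((k * i / n : ℕ) : ℚ) ^ 2 := by
    rw [mul_sum, mul_sum, mul_sum, ← sum_sub_distrib, ← sum_add_distrib]
    refine sum_congr rfl fun i _ => ?_
    rw [natCast_mod]
    push_cast
    ring
  rw [hperm, sum_range_natCast_sq] at hexpand
  linear_combination -hexpand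

lemma filter_range_mul_le {n k m : ℕ} (hn : 0 < n) (hm : m < n * k) :
    (range k).filter (fun j => n * j ≤ m) = range (m / n + 1) := by
  ext j
  rw [mem_filter, mem_range, mem_range, Nat.lt_succ_iff, Nat.le_div_iff_mul_le hn, mul_comm n j]
  exact ⟨And.right, fun h => ⟨Nat.lt_of_mul_lt_mul_right (h.trans_lt (mul_comm n k ▸ hm)), h⟩⟩

lemma sum_below_diagonal_add_sum_above_diagonal {n k : ℕ} (hn : 0 < n) (hk : 0 < k)
    (hco : n.Coprime k) :
    ∑ i ∈ range n, ∑ j ∈ range (k * i / n + 1), j + ∑ j ∈ range k, j * (n * j / k + 1)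
      = n * ∑ j ∈ range k, j := by
  have hsplit : ∀ i ∈ range n, ∀ j ∈ range k,
      j = (if n * j ≤ k * i then j else 0) + (if k * i ≤ n * j then j else 0) := by
    intro i hi j _
    by_cases h1 : n * j ≤ k * i <;> by_cases h2 : k * i ≤ n * j <;> simp only [h1, h2, if_true,
      if_false, add_zero, zero_add]
    · -- a lattice point on the diagonal has `n ∣ i`, hence is the origin
      have hi0 : i = 0 := Nat.eq_zero_of_dvd_of_lt
        (hco.dvd_of_dvd_mul_left ⟨j, (le_antisymm h1 h2).symm⟩) (mem_range.1 hi)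
      subst hi0
      simpa [hn.ne'] using h1
    · omega
  calc ∑ i ∈ range n, ∑ j ∈ range (k * i / n + 1), j + ∑ j ∈ range k, j * (n * j / k + 1)
      = ∑ i ∈ range n, ∑ j ∈ range k, (if n * j ≤ k * i then j else 0)
        + ∑ j ∈ range k, ∑ i ∈ range n, (if k * i ≤ n * j then j else 0) := by
        congr 1
        · refine sum_congr rfl fun i hi => ?_
          rw [← sum_filter, filter_range_mul_le (k := k) hn (by nlinarith [mem_range.1 hi])]
        · refine sum_congr rfl fun j hj => ?_
          rw [← sum_filter, sum_const, smul_eq_mul, filter_range_mul_le (k := n) hk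
            (by nlinarith [mem_range.1 hj]), card_range, mul_comm]
    _ = ∑ i ∈ range n, ∑ j ∈ range k, j := by
        rw [sum_comm (s := range k), ← sum_add_distrib]
        refine sum_congr rfl fun i hi => ?_
        rw [← sum_add_distrib]
        exact (sum_congr rfl (hsplit i hi)).symm
    _ = n * ∑ j ∈ range k, j := by rw [sum_const, card_range, smul_eq_mul]

lemma sum_mul_div_reciprocity {n k : ℕ} (hn : 0 < n) (hk : 0 < k) (hco : n.Coprime k) :
    k * ∑ i ∈ range n, (i : ℚ) * (k * i / n : ℕ) + n * ∑ j ∈ range k, (j : ℚ) * (n * j / k : ℕ)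
      = (8 * n ^ 2 * k ^ 2 - 9 * n ^ 2 * k - 9 * n * k ^ 2 + 9 * n * k + n ^ 2 + k ^ 2 - 1)
        / 12 := by
  have hn0 : (n : ℚ) ≠ 0 := by positivity
  have hlat := congrArg (Nat.cast : ℕ → ℚ) (sum_below_diagonal_add_sum_above_diagonal hn hk hco)
  push_cast at hlat
  simp only [sum_range_natCast, mul_add, mul_one, sum_add_distrib] at hlat
  have hbelow : ∑ i ∈ range n, ((k * i / n + 1 : ℕ) : ℚ) * ((k * i / n + 1 : ℕ) - 1) / 2
      = (∑ i ∈ range n, ((k * i / n : ℕ) : ℚ) ^ 2 + ∑ i ∈ range n, ((k * i / n : ℕ) : ℚ)) / 2 := by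
    rw [← sum_add_distrib, sum_div]
    exact sum_congr rfl fun _ _ => by push_cast; ring
  rw [hbelow] at hlat
  apply mul_left_cancel₀ hn0
  linear_combination (n : ℚ) ^ 2 * hlat - (1 / 2 : ℚ) * sum_range_mul_div_sq hco
    - ((n : ℚ) ^ 2 / 2) * sum_range_mul_div hn hco

/-- Dedekind reciprocity. -/
theorem stmt_3 (n k : ℕ) (hn : 0 < n) (hk : 0 < k) (hco : Nat.Coprime n k) :
    dS 1 k n + dS 1 n k = (1/12) * ((n:ℚ)/k + 1/((n:ℚ)*k) + (k:ℚ)/n) - 1/4 := by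
  have hn0 : (n : ℚ) ≠ 0 := by positivity
  have hk0 : (k : ℚ) ≠ 0 := by positivity
  rw [dS_one_eq hn hco, dS_one_eq hk hco.symm]
  field_simp
  linear_combination (-288 : ℚ) * sum_mul_div_reciprocity hn hk hco
end

section
/- For every odd integer n > 1, 2·s(1,2;n) = (n² - 6n + 5)/(12n), and in particular 2·s(1,2;n) < s(1,1;n). -/
lemma saw_lo (x : ℚ) (h0 : 0 < x) (h1 : x < 1) : saw x = x - 1/2 := by
  have hd : x.den ≠ 1 := by
    intro h
    have hx : (x.num : ℚ) = x := (Rat.den_eq_one_iff x).mp h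
    have h0' : 0 < x.num := by exact_mod_cast hx ▸ h0
    have h1' : x.num < 1 := by exact_mod_cast hx ▸ h1
    omega
  have hf : ⌊x⌋ = 0 := Int.floor_eq_zero_iff.mpr ⟨le_of_lt h0, h1⟩
  simp [saw, hd, hf]

lemma saw_hi (x : ℚ) (h0 : 1 < x) (h1 : x < 2) : saw x = x - 3/2 := by
  have hd : x.den ≠ 1 := by
    intro h
    have hx : (x.num : ℚ) = x := (Rat.den_eq_one_iff x).mp h
    have h0' : 1 < x.num := by exact_mod_cast hx ▸ h0
    have h1' : x.num < 2 := by exact_mod_cast hx ▸ h1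
    omega
  have hf : ⌊x⌋ = 1 := Int.floor_eq_iff.mpr ⟨by exact_mod_cast le_of_lt h0, by push_cast; linarith⟩
  rw [saw, if_neg hd, hf]
  push_cast; ring

lemma sumA (q : ℚ) (hq : q ≠ 0) (m : ℕ) :
    ∑ i ∈ Finset.range m, ((((i:ℚ))+1)/q - 1/2) * (2*(((i:ℚ))+1)/q - 1/2)
      = 2*((m:ℚ)*(m+1)*(2*m+1)/6)/q^2 - (3/2)*((m:ℚ)*(m+1)/2)/q + m/4 := by
  induction m with
  | zero => simp
  | succ k ih =>
    rw [Finset.sum_range_succ, ih]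
    push_cast
    field_simp
    ring

lemma sumB (q s : ℚ) (hq : q ≠ 0) (m : ℕ) :
    ∑ i ∈ Finset.range m, ((s+(i:ℚ))/q - 1/2) * (2*(s+(i:ℚ))/q - 3/2)
      = (2*((m:ℚ)*s^2 + s*(m:ℚ)*((m:ℚ)-1) + (m:ℚ)*((m:ℚ)-1)*(2*(m:ℚ)-1)/6))/q^2
        - (5/(2*q))*((m:ℚ)*s + (m:ℚ)*((m:ℚ)-1)/2) + 3*(m:ℚ)/4 := by
  induction m with
  | zero => norm_num
  | succ k ih =>
    rw [Finset.sum_range_succ, ih]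
    push_cast
    field_simp
    ring

lemma sumC (q : ℚ) (hq : q ≠ 0) (m : ℕ) :
    ∑ i ∈ Finset.range m, ((((i:ℚ))+1)/q - 1/2)^2
      = ((m:ℚ)*(m+1)*(2*m+1)/6)/q^2 - ((m:ℚ)*(m+1)/2)/q + m/4 := by
  induction m with
  | zero => simp
  | succ k ih =>
    rw [Finset.sum_range_succ, ih]
    push_cast
    field_simp
    ring

lemma dS11 (m : ℕ) :
    dS 1 1 (m+1) = (((m+1:ℕ):ℚ)-1)*(((m+1:ℕ):ℚ)-2)/(12*((m+1:ℕ):ℚ)) := by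
  have hN : (0:ℚ) < ((m+1:ℕ):ℚ) := by positivity
  set N : ℚ := ((m+1:ℕ):ℚ) with hNdef
  have hq : N ≠ 0 := ne_of_gt hN
  have hNval : N = (m:ℚ)+1 := by rw [hNdef]; push_cast; ring
  rw [dS, Finset.sum_range_succ']
  have h0 : saw ((0:ℕ) * ((1:ℤ):ℚ) / N) * saw ((0:ℕ) * ((1:ℤ):ℚ) / N) = 0 := by
    norm_num [saw]
  rw [h0, add_zero]
  rw [Finset.sum_congr rfl (fun i hi => ?_), sumC N hq m]
  · rw [hNval]
    have hq' : (m:ℚ)+1 ≠ 0 := by positivity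
    field_simp
    ring
  · rw [Finset.mem_range] at hi
    have e1 : ((i+1:ℕ):ℚ) * ((1:ℤ):ℚ) / N = ((i:ℚ)+1)/N := by push_cast; ring
    have hb0 : (0:ℚ) < ((i:ℚ)+1)/N := by positivity
    have hb1 : ((i:ℚ)+1)/N < 1 := by
      rw [div_lt_one hN, hNdef]
      push_cast
      have : (i:ℚ) < m := by exact_mod_cast hi
      linarith
    rw [e1, saw_lo _ hb0 hb1]
    ring

lemma dS12 (m : ℕ) :
    dS 1 2 (2*m+1) = (m:ℚ)*((m:ℚ)-2)/(6*((2*m+1:ℕ):ℚ)) := by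
  have hN : (0:ℚ) < ((2*m+1:ℕ):ℚ) := by positivity
  set N : ℚ := ((2*m+1:ℕ):ℚ) with hNdef
  have hq : N ≠ 0 := ne_of_gt hN
  have hNval : N = 2*(m:ℚ)+1 := by rw [hNdef]; push_cast; ring
  have hsplit : 2*m+1 = (m+1) + m := by ring
  rw [dS]
  simp only [← hNdef]
  rw [hsplit, Finset.sum_range_add, Finset.sum_range_succ']
  have h0 : saw ((0:ℕ) * ((1:ℤ):ℚ) / N) * saw ((0:ℕ) * ((2:ℤ):ℚ) / N) = 0 := by
    norm_num [saw]
  rw [h0, add_zero]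
  have hA : ∑ k ∈ Finset.range m,
      saw (((k+1:ℕ):ℚ) * ((1:ℤ):ℚ) / N) * saw (((k+1:ℕ):ℚ) * ((2:ℤ):ℚ) / N)
      = ∑ i ∈ Finset.range m, ((((i:ℚ))+1)/N - 1/2) * (2*(((i:ℚ))+1)/N - 1/2) := by
    refine Finset.sum_congr rfl (fun i hi => ?_)
    rw [Finset.mem_range] at hi
    have him : (i:ℚ) < m := by exact_mod_cast hi
    have e1 : ((i+1:ℕ):ℚ) * ((1:ℤ):ℚ) / N = ((i:ℚ)+1)/N := by push_cast; ring
    have e2 : ((i+1:ℕ):ℚ) * ((2:ℤ):ℚ) / N = (2*((i:ℚ)+1))/N := by push_cast; ring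
    have hb0 : (0:ℚ) < ((i:ℚ)+1)/N := by positivity
    have hb1 : ((i:ℚ)+1)/N < 1 := by
      rw [div_lt_one hN, hNval]; linarith
    have hc0 : (0:ℚ) < (2*((i:ℚ)+1))/N := by positivity
    have him2 : (i:ℚ)+1 ≤ (m:ℚ) := by exact_mod_cast hi
    have hc1 : (2*((i:ℚ)+1))/N < 1 := by
      rw [div_lt_one hN, hNval]; linarith
    rw [e1, e2, saw_lo _ hb0 hb1, saw_lo _ hc0 hc1]
  have hB : ∑ k ∈ Finset.range m,
      saw (((m+1+k:ℕ):ℚ) * ((1:ℤ):ℚ) / N) * saw (((m+1+k:ℕ):ℚ) * ((2:ℤ):ℚ) / N)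
      = ∑ i ∈ Finset.range m, ((((m:ℚ)+1)+(i:ℚ))/N - 1/2) * (2*(((m:ℚ)+1)+(i:ℚ))/N - 3/2) := by
    refine Finset.sum_congr rfl (fun i hi => ?_)
    rw [Finset.mem_range] at hi
    have him : (i:ℚ) < m := by exact_mod_cast hi
    have e1 : ((m+1+i:ℕ):ℚ) * ((1:ℤ):ℚ) / N = (((m:ℚ)+1)+(i:ℚ))/N := by push_cast; ring
    have e2 : ((m+1+i:ℕ):ℚ) * ((2:ℤ):ℚ) / N = (2*(((m:ℚ)+1)+(i:ℚ)))/N := by push_cast; ring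
    have hb0 : (0:ℚ) < (((m:ℚ)+1)+(i:ℚ))/N := by positivity
    have hb1 : (((m:ℚ)+1)+(i:ℚ))/N < 1 := by
      rw [div_lt_one hN, hNval]; linarith
    have hc0 : (1:ℚ) < (2*(((m:ℚ)+1)+(i:ℚ)))/N := by
      rw [lt_div_iff₀ hN, hNval]
      have : (0:ℚ) ≤ (i:ℚ) := by positivity
      linarith
    have hc1 : (2*(((m:ℚ)+1)+(i:ℚ)))/N < 2 := by
      rw [div_lt_iff₀ hN, hNval]; linarith
    rw [e1, e2, saw_lo _ hb0 hb1, saw_hi _ hc0 hc1]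
  rw [hA, hB, sumA N hq m, sumB N ((m:ℚ)+1) hq m]
  rw [hNval]
  have hq' : 2*(m:ℚ)+1 ≠ 0 := by positivity
  field_simp
  ring

theorem stmt_5 (n : ℕ) (hn : 1 < n) (hodd : Odd n) :
    2 * dS 1 2 n = ((n:ℚ)^2 - 6*(n:ℚ) + 5)/(12*(n:ℚ)) ∧
    2 * dS 1 2 n < dS 1 1 n := by
  obtain ⟨m, hm⟩ := hodd
  have hn' : n = 2*m+1 := by omega
  subst hn'
  have hm1 : 1 ≤ m := by omega
  have hN : (0:ℚ) < ((2*m+1:ℕ):ℚ) := by positivity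
  have hmQ : (1:ℚ) ≤ (m:ℚ) := by exact_mod_cast hm1
  have hNval : ((2*m+1:ℕ):ℚ) = 2*(m:ℚ)+1 := by push_cast; ring
  have heq : 2 * dS 1 2 (2*m+1)
      = (((2*m+1:ℕ):ℚ)^2 - 6*((2*m+1:ℕ):ℚ) + 5)/(12*((2*m+1:ℕ):ℚ)) := by
    rw [dS12 m, hNval]
    have hq' : 2*(m:ℚ)+1 ≠ 0 := by positivity
    field_simp
    ring
  refine ⟨heq, ?_⟩
  have h11 : dS 1 1 (2*m+1)
      = (((2*m+1:ℕ):ℚ)-1)*(((2*m+1:ℕ):ℚ)-2)/(12*((2*m+1:ℕ):ℚ)) := by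
    have : 2*m+1 = (2*m)+1 := rfl
    rw [this, dS11 (2*m)]
  rw [heq, h11, hNval]
  rw [div_lt_div_iff₀ (by linarith) (by linarith)]
  nlinarith [sq_nonneg ((m:ℚ)-1)]
end

section
/- For every integer n > 5 coprime to 6, 2·s(1,1;n) - 2·s(1,2;n) + s(1,4;n) - s(1,3;n) + s(1, 2·3⁻¹; n) - s(1, 4·3⁻¹; n) > 0, where 3⁻¹ denotes the inverse of 3 modulo n. -/
/-!
Reindexing by `i ↦ 3 * i mod n` turns `s(1, 2·3⁻¹; n)` and `s(1, 4·3⁻¹; n)` into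
`∑ ((3i/n))((2i/n))` and `∑ ((3i/n))((4i/n))`, so the whole combination becomes one sum over `i`
of products of `((i/n))`, `((2i/n))`, `((3i/n))`, `((4i/n))`. Since `gcd(n, 6) = 1`, none of
`n/4, n/3, n/2, 2n/3, 3n/4` is an integer, and between consecutive ones the floors of `2i/n`,
`3i/n`, `4i/n` are constant: there the summand is a quadratic polynomial in `i`. Summing the six closed forms gives
exactly `⌊(n + 5) / 12⌋`, which is positive for `n ≥ 7`.
-/

open Finset

lemma saw_add_intCast (x : ℚ) (k : ℤ) : saw (x + k) = saw x := by
  have hden : (x + k).den = x.den := by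
    simp [Rat.add_intCast_den x k]
  simp only [saw, hden, Int.floor_add_intCast]
  push_cast
  congr 1
  ring

lemma saw_eq_of_lt_of_lt {x : ℚ} {e : ℤ} (h₁ : e < x) (h₂ : x < e + 1) :
    saw x = x - e - 1 / 2 := by
  have hden : x.den ≠ 1 := by
    intro h
    rw [← (Rat.den_eq_one_iff x).mp h] at h₁ h₂
    norm_cast at h₁ h₂
    omega
  rw [saw, if_neg hden, Int.floor_eq_iff.mpr ⟨h₁.le, h₂⟩]

def sawMod (n : ℕ) (x : ZMod n) : ℚ := saw (x.val / n)

lemma saw_intCast_div_eq_sawMod (n : ℕ) [NeZero n] (k : ℤ) :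
    saw ((k : ℚ) / n) = sawMod n k := by
  have hn : (n : ℚ) ≠ 0 := Nat.cast_ne_zero.mpr (NeZero.ne n)
  have hval : ((k : ZMod n).val : ℚ) = ((k % n : ℤ) : ℚ) := by
    exact_mod_cast congrArg (Int.cast : ℤ → ℚ) (ZMod.val_intCast k)
  have hk : (k : ℚ) / n = ((k : ZMod n).val : ℚ) / n + ((k / n : ℤ) : ℚ) := by
    rw [hval]
    field_simp
    exact_mod_cast (Int.emod_add_mul_ediv k n).symm
  rw [hk, saw_add_intCast, sawMod]

lemma sum_range_eq_sum_zmod {M : Type*} [AddCommMonoid M] (n : ℕ) [NeZero n] (g : ZMod n → M) :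
    ∑ i ∈ range n, g i = ∑ x, g x :=
  sum_nbij' (fun i => (i : ZMod n)) (fun x => x.val) (by simp) (by simp [ZMod.val_lt])
    (fun i hi => ZMod.val_cast_of_lt (mem_range.mp hi)) (fun x _ => ZMod.natCast_zmod_val x)
    (fun _ _ => rfl)

lemma dS_eq_sum_sawMod (a b : ℤ) (n : ℕ) [NeZero n] :
    dS a b n = ∑ x : ZMod n, sawMod n (x * a) * sawMod n (x * b) := by
  rw [dS, ← sum_range_eq_sum_zmod]
  refine sum_congr rfl fun i _ => ?_
  have hcast (m : ℤ) : ((i : ZMod n) * m) = ((i * m : ℤ) : ZMod n) := by push_cast; rfl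
  rw [hcast, hcast, ← saw_intCast_div_eq_sawMod, ← saw_intCast_div_eq_sawMod]
  push_cast
  rfl

lemma dS_mul_eq_of_mul_modEq_one {n : ℕ} [NeZero n] {u c : ℤ} (huc : u * c ≡ 1 [ZMOD n])
    (a b : ℤ) : dS a (b * c) n = dS (a * u) b n := by
  have huc' : (u : ZMod n) * c = 1 := by
    exact_mod_cast (ZMod.intCast_eq_intCast_iff _ _ _).mpr huc
  rw [dS_eq_sum_sawMod, dS_eq_sum_sawMod,
    ← Equiv.sum_comp (Units.mulLeft (Units.mkOfMulEqOne _ _ huc'))]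
  refine sum_congr rfl fun x _ => ?_
  simp only [Units.mulLeft, Equiv.coe_fn_mk, Units.val_mkOfMulEqOne]
  push_cast
  congr 2
  · ring
  · linear_combination (x * b) * huc'

lemma saw_natCast_mul_div {n i k e : ℕ} (h₁ : e * n < i * k) (h₂ : i * k < (e + 1) * n) :
    saw (i * k / n) = i * k / n - e - 1 / 2 := by
  have hn : (0 : ℚ) < n := by
    rcases Nat.eq_zero_or_pos n with rfl | hn
    · simp at h₂
    · exact_mod_cast hn
  have h := saw_eq_of_lt_of_lt (x := i * k / n) (e := e)
    (by push_cast; rw [lt_div_iff₀ hn]; exact_mod_cast h₁)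
    (by push_cast; rw [div_lt_iff₀ hn]; exact_mod_cast h₂)
  simpa using h

def combinationTerm (n i : ℕ) : ℚ :=
  2 * saw (i / n) * saw (i / n) - 2 * saw (i / n) * saw (i * 2 / n)
    + saw (i / n) * saw (i * 4 / n) - saw (i / n) * saw (i * 3 / n)
    + saw (i * 3 / n) * saw (i * 2 / n) - saw (i * 3 / n) * saw (i * 4 / n)

lemma dS_combination_eq_sum_combinationTerm (n : ℕ) :
    2 * dS 1 1 n - 2 * dS 1 2 n + dS 1 4 n - dS 1 3 n + dS 3 2 n - dS 3 4 n
      = ∑ i ∈ range n, combinationTerm n i := by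
  simp only [dS, combinationTerm, mul_sum, ← sum_sub_distrib, ← sum_add_distrib]
  refine sum_congr rfl fun i _ => ?_
  push_cast [mul_one]
  ring

lemma combinationTerm_zero (n : ℕ) : combinationTerm n 0 = 0 := by
  simp [combinationTerm, saw]

lemma combinationTerm_eq {n i e₂ e₃ e₄ : ℕ}
    (h : 0 < i ∧ i < n ∧ e₂ * n < i * 2 ∧ i * 2 < (e₂ + 1) * n ∧
      e₃ * n < i * 3 ∧ i * 3 < (e₃ + 1) * n ∧ e₄ * n < i * 4 ∧ i * 4 < (e₄ + 1) * n) :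
    combinationTerm n i = -7 / n ^ 2 * i ^ 2 + (3 / 2 + 2 * e₄ + 3 * e₃ - e₂) / n * i
      + (-e₃ / 2 - e₃ * e₄ - e₂ / 2 + e₂ * e₃) := by
  obtain ⟨h₀, h₁, h₂, h₂', h₃, h₃', h₄, h₄'⟩ := h
  have s₁ : saw (i / n) = i / n - 0 - 1 / 2 := by
    simpa using saw_natCast_mul_div (n := n) (i := i) (k := 1) (e := 0) (by omega) (by omega)
  have s₂ : saw (i * 2 / n) = i * 2 / n - e₂ - 1 / 2 := mod_cast saw_natCast_mul_div h₂ h₂'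
  have s₃ : saw (i * 3 / n) = i * 3 / n - e₃ - 1 / 2 := mod_cast saw_natCast_mul_div h₃ h₃'
  have s₄ : saw (i * 4 / n) = i * 4 / n - e₄ - 1 / 2 := mod_cast saw_natCast_mul_div h₄ h₄'
  have hn : (n : ℚ) ≠ 0 := Nat.cast_ne_zero.mpr (by omega)
  rw [combinationTerm, s₁, s₂, s₃, s₄]
  field_simp
  ring

def quadPrimitive (A B C m : ℚ) : ℚ :=
  A * (m * (m - 1) * (2 * m - 1) / 6) + B * (m * (m - 1) / 2) + C * m

lemma sum_Ico_quadratic (A B C : ℚ) {a b : ℕ} (hab : a ≤ b) :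
    ∑ i ∈ Ico a b, (A * i ^ 2 + B * i + C) = quadPrimitive A B C b - quadPrimitive A B C a := by
  rw [← sum_Ico_sub (fun m : ℕ => quadPrimitive A B C m) hab]
  refine sum_congr rfl fun i _ => ?_
  simp only [quadPrimitive]
  push_cast
  ring

lemma sum_Ico_combinationTerm {n a b : ℕ} (e₂ e₃ e₄ : ℕ) (hab : a ≤ b)
    (h : ∀ i, a ≤ i → i < b →
      0 < i ∧ i < n ∧ e₂ * n < i * 2 ∧ i * 2 < (e₂ + 1) * n ∧
      e₃ * n < i * 3 ∧ i * 3 < (e₃ + 1) * n ∧ e₄ * n < i * 4 ∧ i * 4 < (e₄ + 1) * n) :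
    ∑ i ∈ Ico a b, combinationTerm n i
      = quadPrimitive (-7 / n ^ 2) ((3 / 2 + 2 * e₄ + 3 * e₃ - e₂) / n)
          (-e₃ / 2 - e₃ * e₄ - e₂ / 2 + e₂ * e₃) b
        - quadPrimitive (-7 / n ^ 2) ((3 / 2 + 2 * e₄ + 3 * e₃ - e₂) / n)
          (-e₃ / 2 - e₃ * e₄ - e₂ / 2 + e₂ * e₃) a := by
  rw [← sum_Ico_quadratic _ _ _ hab]
  exact sum_congr rfl fun i hi => combinationTerm_eq (h i (mem_Ico.mp hi).1 (mem_Ico.mp hi).2)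

lemma sum_range_combinationTerm {n : ℕ} (hn : 5 < n) (hco : n.Coprime 6) :
    ∑ i ∈ range n, combinationTerm n i = ((n + 5) / 12 : ℕ) := by
  have h₂ : ¬ 2 ∣ n :=
    Nat.prime_two.coprime_iff_not_dvd.mp (hco.coprime_dvd_right (by norm_num)).symm
  have h₃ : ¬ 3 ∣ n :=
    Nat.prime_three.coprime_iff_not_dvd.mp (hco.coprime_dvd_right (by norm_num)).symm
  rw [range_eq_Ico, sum_eq_sum_Ico_succ_bot (by omega), combinationTerm_zero, zero_add,
    ← sum_Ico_consecutive _ (n := n / 4 + 1) (by omega) (by omega),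
    ← sum_Ico_consecutive _ (m := n / 4 + 1) (n := n / 3 + 1) (by omega) (by omega),
    ← sum_Ico_consecutive _ (m := n / 3 + 1) (n := n / 2 + 1) (by omega) (by omega),
    ← sum_Ico_consecutive _ (m := n / 2 + 1) (n := 2 * n / 3 + 1) (by omega) (by omega),
    ← sum_Ico_consecutive _ (m := 2 * n / 3 + 1) (n := 3 * n / 4 + 1) (by omega) (by omega),
    sum_Ico_combinationTerm 0 0 0 (by omega) (fun _ _ _ => by omega),
    sum_Ico_combinationTerm 0 0 1 (by omega) (fun _ _ _ => by omega),
    sum_Ico_combinationTerm 0 1 1 (by omega) (fun _ _ _ => by omega),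
    sum_Ico_combinationTerm 1 1 2 (by omega) (fun _ _ _ => by omega),
    sum_Ico_combinationTerm 1 2 2 (by omega) (fun _ _ _ => by omega),
    sum_Ico_combinationTerm 1 2 3 (by omega) (fun _ _ _ => by omega)]
  obtain ⟨q, r, hr, rfl⟩ : ∃ q r, r < 12 ∧ n = 12 * q + r :=
    ⟨n / 12, n % 12, Nat.mod_lt _ (by norm_num), (Nat.div_add_mod n 12).symm⟩
  rw [show (12 * q + r) / 4 = 3 * q + r / 4 by omega,
    show (12 * q + r) / 3 = 4 * q + r / 3 by omega,
    show (12 * q + r) / 2 = 6 * q + r / 2 by omega,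
    show 2 * (12 * q + r) / 3 = 8 * q + 2 * r / 3 by omega,
    show 3 * (12 * q + r) / 4 = 9 * q + 3 * r / 4 by omega,
    show (12 * q + r + 5) / 12 = q + (r + 5) / 12 by omega]
  obtain rfl | rfl | rfl | rfl : r = 1 ∨ r = 5 ∨ r = 7 ∨ r = 11 := by omega
  all_goals
    simp only [quadPrimitive, Nat.reduceDiv, Nat.reduceMul, Nat.cast_ofNat]
    push_cast
    field_simp
    ring

theorem stmt_11 (n : ℕ) (hn : 5 < n) (hco : Nat.Coprime n 6)
    (c : ℤ) (hc : 3 * c ≡ 1 [ZMOD (n:ℤ)]) :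
    0 < 2 * dS 1 1 n - 2 * dS 1 2 n + dS 1 4 n - dS 1 3 n
        + dS 1 (2*c) n - dS 1 (4*c) n := by
  have : NeZero n := ⟨by omega⟩
  rw [dS_mul_eq_of_mul_modEq_one hc, dS_mul_eq_of_mul_modEq_one hc, one_mul,
    dS_combination_eq_sum_combinationTerm, sum_range_combinationTerm hn hco]
  have h6 : n ≠ 6 := by rintro rfl; norm_num at hco
  exact_mod_cast (show 0 < (n + 5) / 12 by omega)
end

section
/- For every integer n ≥ 1, setting w* = 3n + 1, one has 5·s(1,1;w*) - 3·s(1,3;w*) = n. (This shows every nonnegative integer is realized as the geometric genus of a Kollár surface.) -/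
lemma saw_eq (x : ℚ) (k : ℤ) (h1 : (k:ℚ) < x) (h2 : x < k + 1) :
    saw x = x - k - 1/2 := by
  have hf : ⌊x⌋ = k := Int.floor_eq_iff.mpr ⟨h1.le, by exact_mod_cast h2⟩
  have hden : x.den ≠ 1 := by
    intro h
    have hx : (x.num : ℚ) = x := (Rat.den_eq_one_iff x).mp h
    rw [← hx] at h1 h2
    have h1' : k < x.num := by exact_mod_cast h1
    have h2' : x.num < k + 1 := by exact_mod_cast h2
    omega
  simp [saw, hden, hf]

lemma piece_sum (N a p : ℕ) (hN : (N:ℚ) ≠ 0) (n : ℕ) :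
    ∑ j ∈ Finset.range n,
      (-4*(((a:ℚ)+j)/N)^2 + (3*(p:ℚ)+1)*(((a:ℚ)+j)/N) - (3*(p:ℚ)-1)/2)
    = -4*(((n:ℚ)*(n-1)*(2*n-1)/6) + a*(n*(n-1)) + (a:ℚ)^2*n)/N^2
      + (3*(p:ℚ)+1)*(((n:ℚ)*(n-1)/2) + a*n)/N - (3*(p:ℚ)-1)/2*n := by
  induction n with
  | zero => simp
  | succ k ih =>
    rw [Finset.sum_range_succ, ih]
    push_cast
    field_simp
    ring

lemma term_eval (N i p : ℕ) (hpi : p*N < 3*i) (hip : 3*i < (p+1)*N) (hiN : i < N) :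
    5 * (saw ((i:ℚ) * ((1:ℤ):ℚ) / (N:ℚ)) * saw ((i:ℚ) * ((1:ℤ):ℚ) / (N:ℚ))) -
      3 * (saw ((i:ℚ) * ((1:ℤ):ℚ) / (N:ℚ)) * saw ((i:ℚ) * ((3:ℤ):ℚ) / (N:ℚ)))
    = -4*((i:ℚ)/N)^2 + (3*(p:ℚ)+1)*((i:ℚ)/N) - (3*(p:ℚ)-1)/2 := by
  have hi1 : 1 ≤ i := by
    have : 0 < 3*i := lt_of_le_of_lt (Nat.zero_le _) hpi
    omega
  have hN : (0:ℚ) < N := by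
    have : 0 < N := by omega
    exact_mod_cast this
  have hiQ : (0:ℚ) < i := by exact_mod_cast hi1
  have hx : (i:ℚ) * ((1:ℤ):ℚ) / (N:ℚ) = (i:ℚ)/N := by push_cast; ring
  have hy : (i:ℚ) * ((3:ℤ):ℚ) / (N:ℚ) = 3*(i:ℚ)/N := by push_cast; ring
  have h01 : ((0:ℤ):ℚ) < (i:ℚ)/N := by
    push_cast
    exact div_pos hiQ hN
  have h02 : (i:ℚ)/N < (0:ℤ) + 1 := by
    push_cast
    rw [zero_add, div_lt_one hN]
    exact_mod_cast hiN
  have hp1 : ((p:ℤ):ℚ) < 3*(i:ℚ)/N := by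
    rw [lt_div_iff₀ hN]
    push_cast
    exact_mod_cast hpi
  have hp2 : 3*(i:ℚ)/N < ((p:ℤ):ℚ) + 1 := by
    rw [div_lt_iff₀ hN]
    have : (3:ℚ)*i < ((p:ℚ)+1)*N := by exact_mod_cast hip
    push_cast
    linarith
  rw [hx, hy, saw_eq _ 0 h01 h02, saw_eq _ (p:ℤ) hp1 hp2]
  push_cast
  field_simp
  ring

theorem stmt_14 (n : ℕ) (hn : 1 ≤ n) :
    5 * dS 1 1 (3*n+1) - 3 * dS 1 3 (3*n+1) = (n:ℚ) := by
  have hN0 : ((1+n+n+n:ℕ):ℚ) ≠ 0 := by positivity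
  unfold dS
  rw [Finset.mul_sum, Finset.mul_sum, ← Finset.sum_sub_distrib]
  rw [show 3*n+1 = 1+n+n+n by ring]
  rw [Finset.sum_range_add, Finset.sum_range_add, Finset.sum_range_add]
  have h1 : ∀ (a p : ℕ), (∀ j, j < n → p*(1+n+n+n) < 3*(a+j) ∧ 3*(a+j) < (p+1)*(1+n+n+n) ∧ a+j < 1+n+n+n) →
      ∑ x ∈ Finset.range n,
        (5 * (saw ((((a+x:ℕ)):ℚ) * ((1:ℤ):ℚ) / ((1+n+n+n:ℕ):ℚ)) * saw ((((a+x:ℕ)):ℚ) * ((1:ℤ):ℚ) / ((1+n+n+n:ℕ):ℚ))) -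
          3 * (saw ((((a+x:ℕ)):ℚ) * ((1:ℤ):ℚ) / ((1+n+n+n:ℕ):ℚ)) * saw ((((a+x:ℕ)):ℚ) * ((3:ℤ):ℚ) / ((1+n+n+n:ℕ):ℚ))))
      = -4*(((n:ℚ)*(n-1)*(2*n-1)/6) + a*(n*(n-1)) + (a:ℚ)^2*n)/((1+n+n+n:ℕ):ℚ)^2
        + (3*(p:ℚ)+1)*(((n:ℚ)*(n-1)/2) + a*n)/((1+n+n+n:ℕ):ℚ) - (3*(p:ℚ)-1)/2*n := by
    intro a p hb
    rw [← piece_sum (1+n+n+n) a p hN0 n]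
    refine Finset.sum_congr rfl fun j hj => ?_
    have hj' := hb j (Finset.mem_range.mp hj)
    rw [term_eval (1+n+n+n) (a+j) p hj'.1 hj'.2.1 hj'.2.2]
    push_cast
    ring
  rw [h1 1 0 (by intro j hj; omega), h1 (1+n) 1 (by intro j hj; omega),
      h1 (1+n+n) 2 (by intro j hj; omega)]
  have h0 : ∑ x ∈ Finset.range 1,
      (5 * (saw ((x:ℚ) * ((1:ℤ):ℚ) / ((1+n+n+n:ℕ):ℚ)) * saw ((x:ℚ) * ((1:ℤ):ℚ) / ((1+n+n+n:ℕ):ℚ))) -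
        3 * (saw ((x:ℚ) * ((1:ℤ):ℚ) / ((1+n+n+n:ℕ):ℚ)) * saw ((x:ℚ) * ((3:ℤ):ℚ) / ((1+n+n+n:ℕ):ℚ)))) = 0 := by
    simp [saw]
  rw [h0]
  push_cast
  field_simp
  ring
end
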